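/- Let S_λ be a weighted shift on a directed tree T with weights λ = {λ_v}_{v∈V°} such that E ⊆ D∞(S_λ), let u ∈ V be a vertex with Chi(u) ≠ ∅, and suppose that for every v ∈ Chi(u) the sequence {‖S_λⁿ e_v‖²}_{n≥0} is a Stieltjes moment sequence with representing measure μ_v. Then: (i) if Σ_{v∈Chi(u)} |λ_v|² ∫_0^∞ (1/s) dμ_v(s) ≤ 1, then {‖S_λⁿ e_u‖²}_{n≥0} is a Stieltjes moment sequence and the measure μ_u defined by μ_u(σ) = Σ_{v∈Chi(u)} |λ_v|² ∫_σ (1/s) dμ_v(s) + ε_u δ₀(σ), with ε_u = 1 − Σ_{v∈Chi(u)} |λ_v|² ∫_0^∞ (1/s) dμ_v(s), is a representing measure of it; (ii) if {‖S_λⁿ e_u‖²}_{n≥0} is a Stieltjes moment sequence and {‖S_λ^{n+1} e_u‖²}_{n≥0} is determinate, then Σ_{v∈Chi(u)} |λ_v|² ∫_0^∞ (1/s) dμ_v(s) ≤ 1, the sequence {‖S_λⁿ e_u‖²}_{n≥0} is determinate, and its unique representing measure is the measure μ_u defined above. -/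

import Mathlib

open Filter
open scoped ENNReal InnerProductSpace ComplexConjugate

attribute [local instance] Classical.propDecidable

noncomputable section

namespace Paper

universe u

/-- A directed tree: a directed graph which is connected (as an undirected graph), has no
(directed) circuits, and in which every vertex has at most one parent. -/
structure DirectedTree (V : Type*) where
  E : V → V → Prop
  connected : ∀ u v : V, Relation.ReflTransGen (fun a b => E a b ∨ E b a) u v
  noCircuits : ∀ v : V, ¬ Relation.TransGen E v v
  par_unique : ∀ ⦃u₁ u₂ v : V⦄, E u₁ v → E u₂ v → u₁ = u₂

namespace DirectedTree

variable {V : Type*} (t : DirectedTree V)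

/-- The set of children of a vertex. -/
def chi (u : V) : Set V := {v | t.E u v}

/-- `v` has a parent, i.e. `v ∈ V°`. -/
def hasPar (v : V) : Prop := ∃ u, t.E u v

/-- The parent partial function, as a total function with junk value `v` at parentless
vertices. -/
noncomputable def par (v : V) : V := if h : t.hasPar v then h.choose else v

/-- Children of a set of vertices. -/
def chiSet (W : Set V) : Set V := {v | ∃ u ∈ W, t.E u v}

/-- `n`-fold children of a set of vertices. -/
def chiIter : ℕ → Set V → Set V
  | 0, W => W
  | n + 1, W => t.chiSet (chiIter n W)

/-- `Chi^⟨n⟩(u)`. -/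
def chin (n : ℕ) (u : V) : Set V := t.chiIter n {u}

/-- The descendants of a vertex. -/
def des (u : V) : Set V := ⋃ n : ℕ, t.chin n u

/-- `λ_{u∣v} = ∏_{j=0}^{n-1} λ_{par^j(v)}` for `v ∈ Chi^⟨n⟩(u)`. -/
noncomputable def wprod (lam : V → ℂ) (n : ℕ) (v : V) : ℂ :=
  ∏ j ∈ Finset.range n, lam (t.par^[j] v)

end DirectedTree

/-- The Hilbert space `ℓ²(V)`. -/
abbrev H2 (V : Type*) := lp (fun _ : V => ℂ) 2

/-- The basis vector `e_u ∈ ℓ²(V)`. -/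
noncomputable def evec {V : Type*} (u : V) : H2 V :=
  haveI := Classical.decEq V
  lp.single 2 u 1

/-- The linear subspace `E = lin{e_u : u ∈ V}`. -/
noncomputable def espan (V : Type*) : Submodule ℂ (H2 V) :=
  Submodule.span ℂ (Set.range (evec : V → H2 V))

/-- The map `Λ_T` on all functions `V → ℂ`:
`(Λ_T f)(v) = λ_v f(par(v))` for `v ∈ V°` and `0` at the root. -/
noncomputable def lamLin {V : Type*} (t : DirectedTree V) (lam : V → ℂ) :
    (V → ℂ) →ₗ[ℂ] (V → ℂ) where
  toFun f := fun v => if t.hasPar v then lam v * f (t.par v) else 0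
  map_add' f g := by
    funext v
    by_cases h : t.hasPar v <;> simp [h, mul_add]
  map_smul' c f := by
    funext v
    by_cases h : t.hasPar v <;> simp [h] <;> ring

/-- The domain `{f ∈ ℓ²(V) : Λ_T f ∈ ℓ²(V)}` of the weighted shift. -/
noncomputable def shiftDom {V : Type*} (t : DirectedTree V) (lam : V → ℂ) :
    Submodule ℂ (H2 V) where
  carrier := {f | Memℓp (lamLin t lam f) 2}
  zero_mem' := by
    simpa only [Set.mem_setOf_eq, lp.coeFn_zero, map_zero] using zero_memℓp
  add_mem' := by
    intro f g hf hg
    simp only [Set.mem_setOf_eq, lp.coeFn_add, map_add] at *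
    exact hf.add hg
  smul_mem' := by
    intro c f hf
    simp only [Set.mem_setOf_eq] at hf ⊢
    rw [lp.coeFn_smul, LinearMap.map_smul]
    exact hf.const_smul c

/-- The weighted shift `S_λ` on the directed tree `T`, as an unbounded operator in `ℓ²(V)`. -/
noncomputable def shift {V : Type*} (t : DirectedTree V) (lam : V → ℂ) :
    H2 V →ₗ.[ℂ] H2 V where
  domain := shiftDom t lam
  toFun :=
    { toFun := fun f => (⟨lamLin t lam f, f.2⟩ : H2 V)
      map_add' := by
        intro f g
        apply lp.ext
        simp only [Submodule.coe_add, lp.coeFn_add, map_add]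
      map_smul' := by
        intro c f
        apply lp.ext
        simp only [SetLike.val_smul, lp.coeFn_smul, LinearMap.map_smul, RingHom.id_apply] }

section Operator

variable {H : Type*} [NormedAddCommGroup H] [InnerProductSpace ℂ H]

/-- `x ∈ D(Tⁿ)`. -/
def iterMem (T : H →ₗ.[ℂ] H) : ℕ → H → Prop
  | 0, _ => True
  | n + 1, x => ∃ h : x ∈ T.domain, iterMem T n (T ⟨x, h⟩)

/-- `Tⁿ x` (junk value `0` if undefined along the way). -/
noncomputable def iterApp (T : H →ₗ.[ℂ] H) : ℕ → H → H
  | 0, x => x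
  | n + 1, x => if h : x ∈ T.domain then iterApp T n (T ⟨x, h⟩) else 0

/-- The inner product in the paper's convention: `⟨x, y⟩` is linear in `x`. -/
noncomputable def pinner (x y : H) : ℂ := inner (𝕜 := ℂ) y x

/-- `E ⊆ D∞(S_λ)` where `E = lin{e_u : u ∈ V}`. -/
def spanDomInfty {V : Type*} (t : DirectedTree V) (lam : V → ℂ) : Prop :=
  ∀ f ∈ espan V, ∀ n : ℕ, iterMem (shift t lam) n f

/-- A linear subspace `F` is a core of `T` if the graph of `T` is contained in the closure of
the graph of `T|_F`. -/
def IsCore (T : H →ₗ.[ℂ] H) (F : Submodule ℂ H) : Prop :=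
  (T.graph : Set (H × H)) ⊆ closure ((T.domRestrict F).graph : Set (H × H))

/-- `f` is a quasi-analytic vector of `T`:
`f ∈ D∞(T)` and `∑_{n ≥ 1} ‖Tⁿ f‖^{-1/n} = ∞` (convention `1/0 = ∞`). -/
def QuasiAnalyticVec (T : H →ₗ.[ℂ] H) (f : H) : Prop :=
  (∀ n : ℕ, iterMem T n f) ∧
    ∑' n : ℕ, (ENNReal.ofReal (‖iterApp T (n + 1) f‖ ^ (1 / (n + 1 : ℝ))))⁻¹ = ∞

end Operator

section NormalSubnormal

/-- A normal operator: closed, densely defined, with `D(N) = D(N*)` and `‖N* h‖ = ‖N h‖` on the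
common domain. -/
structure IsNormalOp {K : Type*} [NormedAddCommGroup K] [InnerProductSpace ℂ K]
    [CompleteSpace K] (N : K →ₗ.[ℂ] K) : Prop where
  dense : Dense (N.domain : Set K)
  isClosed : N.IsClosed
  dom_adjoint : N.adjoint.domain = N.domain
  norm_adjoint : ∀ (x : K) (hx : x ∈ N.domain) (hx' : x ∈ N.adjoint.domain),
    ‖N.adjoint ⟨x, hx'⟩‖ = ‖N ⟨x, hx⟩‖

/-- A normal extension of `S`: a Hilbert space `K`, an isometric linear embedding `J : H → K`,
and a normal operator `N` in `K` with `N (J h) = J (S h)` for all `h ∈ D(S)`. -/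
structure NormalExtension {H : Type u} [NormedAddCommGroup H] [InnerProductSpace ℂ H]
    (S : H →ₗ.[ℂ] H) : Type (u + 1) where
  K : Type u
  [instNG : NormedAddCommGroup K]
  [instIP : InnerProductSpace ℂ K]
  [instCS : CompleteSpace K]
  J : H →ₗᵢ[ℂ] K
  N : K →ₗ.[ℂ] K
  normal : IsNormalOp N
  ext_prop : ∀ x : S.domain, ∃ hx : J x ∈ N.domain, N ⟨J x, hx⟩ = J (S x)

/-- A densely defined operator is subnormal if it has a normal extension. -/
def Subnormal {H : Type u} [NormedAddCommGroup H] [InnerProductSpace ℂ H]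
    (S : H →ₗ.[ℂ] H) : Prop :=
  Dense (S.domain : Set H) ∧ Nonempty (NormalExtension S)

/-- A hyponormal operator: densely defined, `D(S) ⊆ D(S*)` and `‖S* f‖ ≤ ‖S f‖` on `D(S)`. -/
def Hyponormal {H : Type*} [NormedAddCommGroup H] [InnerProductSpace ℂ H] [CompleteSpace H]
    (S : H →ₗ.[ℂ] H) : Prop :=
  Dense (S.domain : Set H) ∧ S.domain ≤ S.adjoint.domain ∧
    ∀ (x : H) (hx : x ∈ S.domain) (hx' : x ∈ S.adjoint.domain),
      ‖S.adjoint ⟨x, hx'⟩‖ ≤ ‖S ⟨x, hx⟩‖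

end NormalSubnormal

section Stieltjes

open MeasureTheory

/-- `μ` is a representing measure of `{t_n}`: a positive Borel measure on `ℝ₊`
with `t_n = ∫_0^∞ sⁿ dμ(s)` for all `n`. -/
def IsRepMeasure (μ : Measure ℝ) (t : ℕ → ℝ) : Prop :=
  μ (Set.Iio 0) = 0 ∧ ∀ n : ℕ, Integrable (fun s => s ^ n) μ ∧ t n = ∫ s, s ^ n ∂μ

/-- `{t_n}` is a Stieltjes moment sequence. -/
def IsStieltjes (t : ℕ → ℝ) : Prop := ∃ μ : Measure ℝ, IsRepMeasure μ t

/-- A Stieltjes moment sequence is determinate if it has only one representing measure. -/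
def Determinate (t : ℕ → ℝ) : Prop :=
  ∀ ⦃μ ν : Measure ℝ⦄, IsRepMeasure μ t → IsRepMeasure ν t → μ = ν

/-- `∫_σ (1/s) dμ(s)`, with the convention `1/0 = ∞`. -/
noncomputable def recipInt (μ : Measure ℝ) (σ : Set ℝ) : ℝ≥0∞ :=
  ∫⁻ s in σ, (ENNReal.ofReal s)⁻¹ ∂μ

/-- The sequence `(θ, t_0, t_1, …)`. -/
def prepend (θ : ℝ) (t : ℕ → ℝ) : ℕ → ℝ
  | 0 => θ
  | n + 1 => t n

/-- `{t_n}` is positive definite. -/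
def PosDefSeq (t : ℕ → ℝ) : Prop :=
  ∀ (n : ℕ) (α : ℕ → ℂ),
    0 ≤ (∑ k ∈ Finset.range (n + 1), ∑ l ∈ Finset.range (n + 1),
      (t (k + l) : ℂ) * α k * (starRingEnd ℂ) (α l)).re

/-- The measure `ν_μ(σ) = ∫_σ (1/s) dμ(s) + (θ − ∫_0^∞ (1/s) dμ(s)) δ₀(σ)`. -/
noncomputable def numap (θ : ℝ) (μ : Measure ℝ) : Measure ℝ :=
  μ.withDensity (fun s => (ENNReal.ofReal s)⁻¹) +
    (ENNReal.ofReal θ - recipInt μ Set.univ) • Measure.dirac (0 : ℝ)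

/-- The measure `μ_ν(σ) = ∫_σ s dν(s)`. -/
noncomputable def mumap (ν : Measure ℝ) : Measure ℝ :=
  ν.withDensity fun s => ENNReal.ofReal s

end Stieltjes

section Consistency

open MeasureTheory

variable {V : Type*}

/-- The consistency condition \eqref{muu+} at the vertex `u`:
`μ_u(σ) = Σ_{v ∈ Chi(u)} |λ_v|² ∫_σ (1/s) dμ_v(s) + ε_u δ₀(σ)`. -/
def Consistent (t : DirectedTree V) (lam : V → ℂ) (μ : V → Measure ℝ) (ε : V → ℝ)
    (u : V) : Prop :=
  ∀ σ : Set ℝ, MeasurableSet σ →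
    μ u σ = (∑' v : t.chi u, ENNReal.ofReal (‖lam (v : V)‖ ^ 2) * recipInt (μ (v : V)) σ)
      + ENNReal.ofReal (ε u) * Measure.dirac (0 : ℝ) σ

/-- The measure `μ_u` from Lemma charsub2, built from the children measures:
`μ_u(σ) = Σ_{v ∈ Chi(u)} |λ_v|² ∫_σ (1/s) dμ_v(s) + ε_u δ₀(σ)` with
`ε_u = 1 − Σ_{v ∈ Chi(u)} |λ_v|² ∫_0^∞ (1/s) dμ_v(s)`. -/
noncomputable def consMeasure (t : DirectedTree V) (lam : V → ℂ) (μ : V → Measure ℝ)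
    (u : V) : Measure ℝ :=
  Measure.sum (fun v : t.chi u =>
      ENNReal.ofReal (‖lam (v : V)‖ ^ 2) •
        (μ (v : V)).withDensity fun s => (ENNReal.ofReal s)⁻¹) +
    (1 - ∑' v : t.chi u, ENNReal.ofReal (‖lam (v : V)‖ ^ 2) * recipInt (μ (v : V)) Set.univ) •
      Measure.dirac (0 : ℝ)

end Consistency

end Paper

open Paper MeasureTheory Filter
open scoped ENNReal

/-
Write `a_n = ‖S_λⁿ e_u‖²`. Since `S_λ e_u = Σ_{v ∈ Chi(u)} λ_v e_v` and the vectors `S_λⁿ e_v` have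
disjoint supports, `a_{n+1} = Σ_v |λ_v|² ‖S_λⁿ e_v‖²`, so `ν = Σ_v |λ_v|² μ_v` represents the
shifted sequence `(a_{n+1})`. Dividing `ν` by `s` and putting the missing mass `a_0 - ∫ 1/s dν`
at `0` gives `μ_u` (this is `numap 1 ν`), which represents `(a_n)` as soon as that mass is
nonnegative. Conversely, if `ρ` represents `(a_n)` then `s dρ(s)` represents `(a_{n+1})`, hence
equals `ν` by determinacy; so `ρ` and `μ_u` agree on `(0, ∞)`, both have total mass `a_0` and
neither charges `(-∞, 0)`, whence `ρ = μ_u` and `∫ 1/s dν = ρ((0, ∞)) ≤ 1`.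
-/

namespace Paper

section Moments

variable {μ : Measure ℝ} {a : ℕ → ℝ}

theorem ae_nonneg_of_measure_Iio_eq_zero (h : μ (Set.Iio 0) = 0) : ∀ᵐ s ∂μ, 0 ≤ s := by
  rw [ae_iff]
  convert h using 2
  ext s
  simp

theorem IsRepMeasure.lintegral_pow (h : IsRepMeasure μ a) (n : ℕ) :
    ∫⁻ s, ENNReal.ofReal (s ^ n) ∂μ = ENNReal.ofReal (a n) := by
  rw [(h.2 n).2, ofReal_integral_eq_lintegral_ofReal (h.2 n).1]
  exact (ae_nonneg_of_measure_Iio_eq_zero h.1).mono fun s hs => pow_nonneg hs n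

theorem isRepMeasure_of_lintegral_pow (h0 : μ (Set.Iio 0) = 0) (ha : ∀ n, 0 ≤ a n)
    (hl : ∀ n, ∫⁻ s, ENNReal.ofReal (s ^ n) ∂μ = ENNReal.ofReal (a n)) : IsRepMeasure μ a := by
  refine ⟨h0, fun n => ?_⟩
  have hnn : 0 ≤ᵐ[μ] fun s => s ^ n :=
    (ae_nonneg_of_measure_Iio_eq_zero h0).mono fun s hs => pow_nonneg hs n
  have hint : Integrable (fun s => s ^ n) μ := by
    refine ⟨(continuous_pow n).aestronglyMeasurable, ?_⟩
    rw [hasFiniteIntegral_iff_ofReal hnn, hl n]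
    exact ENNReal.ofReal_lt_top
  refine ⟨hint, ?_⟩
  rw [← ENNReal.ofReal_eq_ofReal_iff (ha n) (integral_nonneg_of_ae hnn),
    ofReal_integral_eq_lintegral_ofReal hint hnn, hl n]

theorem IsRepMeasure.nonneg (h : IsRepMeasure μ a) (n : ℕ) : 0 ≤ a n := by
  rw [(h.2 n).2]
  exact integral_nonneg_of_ae <|
    (ae_nonneg_of_measure_Iio_eq_zero h.1).mono fun s hs => pow_nonneg hs n

theorem IsRepMeasure.sum_smul {ι : Type*} {μ : ι → Measure ℝ} {m : ι → ℕ → ℝ} (c : ι → ℝ≥0∞)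
    (h : ∀ i, IsRepMeasure (μ i) (m i)) (ha : ∀ n, 0 ≤ a n)
    (hm : ∀ n, ENNReal.ofReal (a n) = ∑' i, c i * ENNReal.ofReal (m i n)) :
    IsRepMeasure (Measure.sum fun i => c i • μ i) a := by
  refine isRepMeasure_of_lintegral_pow ?_ ha fun n => ?_
  · simp [Measure.sum_apply _ measurableSet_Iio, (h _).1]
  · simp [lintegral_sum_measure, (h _).lintegral_pow, hm]

theorem recipInt_sum_smul {ι : Type*} (μ : ι → Measure ℝ) (c : ι → ℝ≥0∞) {σ : Set ℝ}
    (hσ : MeasurableSet σ) :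
    recipInt (Measure.sum fun i => c i • μ i) σ = ∑' i, c i * recipInt (μ i) σ := by
  simp [recipInt, Measure.restrict_sum _ hσ, lintegral_sum_measure]

end Moments

section BackwardExtension

variable {μ ν ρ : Measure ℝ} {a : ℕ → ℝ}

theorem IsRepMeasure.measure_univ (h : IsRepMeasure μ a) : μ Set.univ = ENNReal.ofReal (a 0) := by
  simpa using h.lintegral_pow 0

theorem measure_singleton_zero_eq_zero (h : recipInt μ Set.univ ≠ ∞) : μ {0} = 0 := by
  by_contra h0
  refine h (top_le_iff.mp ?_)
  calc ∞ = ∫⁻ s in {0}, (ENNReal.ofReal s)⁻¹ ∂μ := by simp [h0]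
    _ ≤ recipInt μ Set.univ := by
      rw [recipInt, Measure.restrict_univ]
      exact setLIntegral_le_lintegral _ _

theorem IsRepMeasure.numap (hν : IsRepMeasure ν fun n => a (n + 1)) (ha0 : 0 ≤ a 0)
    (hle : recipInt ν Set.univ ≤ ENNReal.ofReal (a 0)) : IsRepMeasure (numap (a 0) ν) a := by
  have hpos : ∀ᵐ s ∂ν, 0 < s := by
    have h0 : ν {0} = 0 :=
      measure_singleton_zero_eq_zero (ne_top_of_le_ne_top ENNReal.ofReal_ne_top hle)
    filter_upwards [ae_nonneg_of_measure_Iio_eq_zero hν.1, measure_eq_zero_iff_ae_notMem.mp h0]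
      with s hs hs0
    exact hs.lt_of_ne (Ne.symm hs0)
  refine isRepMeasure_of_lintegral_pow ?_ (fun n => ?_) fun n => ?_
  · simp [Paper.numap, withDensity_apply _ measurableSet_Iio, Measure.restrict_eq_zero.mpr hν.1]
  · cases n
    exacts [ha0, hν.nonneg _]
  rw [Paper.numap, lintegral_add_measure, lintegral_smul_measure, lintegral_dirac,
    lintegral_withDensity_eq_lintegral_mul _ (by fun_prop) (by fun_prop)]
  cases n with
  | zero =>
    simpa [recipInt] using add_tsub_cancel_of_le hle
  | succ n =>
    rw [← hν.lintegral_pow n]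
    simp only [zero_pow n.succ_ne_zero, ENNReal.ofReal_zero, smul_zero, add_zero]
    refine lintegral_congr_ae (hpos.mono fun s hs => ?_)
    have hs' : ENNReal.ofReal s ≠ 0 := ENNReal.ofReal_pos.mpr hs |>.ne'
    rw [Pi.mul_apply, pow_succ', ENNReal.ofReal_mul hs.le, ← mul_assoc,
      ENNReal.inv_mul_cancel hs' ENNReal.ofReal_ne_top, one_mul]

theorem IsRepMeasure.mumap (hρ : IsRepMeasure ρ a) : IsRepMeasure (mumap ρ) fun n => a (n + 1) := by
  refine isRepMeasure_of_lintegral_pow ?_ (fun n => hρ.nonneg _) fun n => ?_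
  · simp [Paper.mumap, withDensity_apply _ measurableSet_Iio, Measure.restrict_eq_zero.mpr hρ.1]
  rw [Paper.mumap, lintegral_withDensity_eq_lintegral_mul _ (by fun_prop) (by fun_prop),
    ← hρ.lintegral_pow]
  refine lintegral_congr_ae ((ae_nonneg_of_measure_Iio_eq_zero hρ.1).mono fun s hs => ?_)
  simp only [Pi.mul_apply, ← ENNReal.ofReal_mul hs, pow_succ']

theorem withDensity_inv_mumap (ρ : Measure ℝ) :
    (mumap ρ).withDensity (fun s => (ENNReal.ofReal s)⁻¹) = ρ.restrict (Set.Ioi 0) := by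
  have hmul : ((fun s : ℝ => ENNReal.ofReal s) * fun s => (ENNReal.ofReal s)⁻¹) =
      (Set.Ioi 0).indicator 1 := by
    funext s
    by_cases hs : 0 < s
    · simp [hs, ENNReal.mul_inv_cancel (ENNReal.ofReal_pos.mpr hs).ne' ENNReal.ofReal_ne_top]
    · simp [hs, ENNReal.ofReal_eq_zero.mpr (not_lt.mp hs)]
  rw [Paper.mumap, ← withDensity_mul _ (by fun_prop) (by fun_prop),
    hmul, withDensity_indicator_one measurableSet_Ioi]

theorem recipInt_mumap_univ (ρ : Measure ℝ) : recipInt (mumap ρ) Set.univ = ρ (Set.Ioi 0) := by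
  rw [recipInt, ← withDensity_apply _ MeasurableSet.univ, withDensity_inv_mumap,
    Measure.restrict_apply_univ]

theorem IsRepMeasure.recipInt_mumap_le (hρ : IsRepMeasure ρ a) :
    recipInt (Paper.mumap ρ) Set.univ ≤ ENNReal.ofReal (a 0) := by
  rw [recipInt_mumap_univ, ← hρ.measure_univ]
  exact measure_mono (Set.subset_univ _)

theorem numap_mumap_eq (hρ : IsRepMeasure ρ a) : numap (a 0) (mumap ρ) = ρ := by
  have hIic : Set.Iic (0 : ℝ) =ᵐ[ρ] ({0} : Set ℝ) :=
    ae_eq_set.mpr ⟨by simpa [Set.Iic_sdiff_right] using hρ.1,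
      by rw [Set.sdiff_eq_empty.mpr (by simp), measure_empty]⟩
  have hfin : ρ (Set.Ioi 0) ≠ ∞ :=
    ne_top_of_le_ne_top (hρ.measure_univ ▸ ENNReal.ofReal_ne_top) (measure_mono (Set.subset_univ _))
  have hzero : ENNReal.ofReal (a 0) - ρ (Set.Ioi 0) = ρ {0} := by
    rw [← hρ.measure_univ, ← measure_compl measurableSet_Ioi hfin, Set.compl_Ioi,
      measure_congr hIic]
  calc numap (a 0) (mumap ρ) = ρ.restrict (Set.Ioi 0) + ρ {0} • Measure.dirac 0 := by
        rw [Paper.numap, withDensity_inv_mumap, recipInt_mumap_univ, hzero]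
    _ = ρ.restrict (Set.Ioi 0) + ρ.restrict (Set.Ioi 0)ᶜ := by
        rw [Set.compl_Ioi, Measure.restrict_congr_set hIic, Measure.restrict_singleton]
    _ = ρ := Measure.restrict_add_restrict_compl measurableSet_Ioi

end BackwardExtension

namespace DirectedTree

variable {V : Type*} (t : DirectedTree V)

theorem par_eq_of_E {u v : V} (h : t.E u v) : t.par v = u := by
  have hv : t.hasPar v := ⟨u, h⟩
  rw [par, dif_pos hv]
  exact t.par_unique hv.choose_spec h

end DirectedTree

section Shift

variable {V : Type*} (t : DirectedTree V) (lam : V → ℂ)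

theorem evec_apply (u w : V) : evec u w = if w = u then 1 else 0 := by
  rw [evec, lp.single_apply, Pi.single_apply]

theorem lamLin_evec_apply (u w : V) : lamLin t lam (evec u) w = if t.E u w then lam w else 0 := by
  change (if t.hasPar w then lam w * evec u (t.par w) else 0) = _
  by_cases hw : t.hasPar w
  · have hpar : t.E (t.par w) w := by
      rw [DirectedTree.par, dif_pos hw]
      exact hw.choose_spec
    by_cases hu : t.E u w
    · simp [hw, hu, evec_apply, t.par_eq_of_E hu]
    · have : t.par w ≠ u := fun h => hu (h ▸ hpar)
      simp [hw, hu, evec_apply, this]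
  · have hu : ¬ t.E u w := fun h => hw ⟨u, h⟩
    simp [hw, hu]

theorem exists_lamLin_iterate_apply (n : ℕ) (w : V) :
    ∃ c : ℂ, ∀ f : V → ℂ, (⇑(lamLin t lam))^[n] f w = c * f (t.par^[n] w) := by
  induction n with
  | zero => exact ⟨1, fun f => by simp⟩
  | succ n ih =>
    obtain ⟨c, hc⟩ := ih
    set p := t.par^[n] w
    refine ⟨c * if t.hasPar p then lam p else 0, fun f => ?_⟩
    rw [Function.iterate_succ_apply, hc, Function.iterate_succ_apply']
    change c * (if t.hasPar p then lam p * f (t.par p) else 0) = _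
    split_ifs <;> ring

theorem ofReal_normSq_lamLin_iterate_succ_evec (u : V) (n : ℕ) (w : V) :
    ENNReal.ofReal (‖(⇑(lamLin t lam))^[n + 1] (evec u) w‖ ^ 2) =
      ∑' v : t.chi u, ENNReal.ofReal (‖lam v‖ ^ 2) *
        ENNReal.ofReal (‖(⇑(lamLin t lam))^[n] (evec (v : V)) w‖ ^ 2) := by
  obtain ⟨c, hc⟩ := exists_lamLin_iterate_apply t lam n w
  rw [Function.iterate_succ_apply, hc, lamLin_evec_apply]
  simp only [hc, evec_apply]
  by_cases hp : t.E u (t.par^[n] w)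
  · rw [tsum_eq_single ⟨_, hp⟩ fun v hv => by simp [Ne.symm (Subtype.coe_ne_coe.mpr hv)],
      if_pos hp, if_pos rfl, ← ENNReal.ofReal_mul (by positivity)]
    congr 1
    rw [norm_mul, norm_mul, norm_one]
    ring
  · have hne : ∀ v : t.chi u, t.par^[n] w ≠ v := fun v h => hp (h ▸ v.2)
    simp [hp, hne]

theorem ofReal_norm_sq_eq_tsum (f : H2 V) :
    ENNReal.ofReal (‖f‖ ^ 2) = ∑' w, ENNReal.ofReal (‖f w‖ ^ 2) := by
  have h := lp.hasSum_norm (p := 2) (by norm_num) f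
  simp only [ENNReal.toReal_ofNat, Real.rpow_two] at h
  rw [← h.tsum_eq, ENNReal.ofReal_tsum_of_nonneg (fun w => by positivity) h.summable]

theorem coe_iterApp_shift {n : ℕ} {x : H2 V} (hx : iterMem (shift t lam) n x) :
    ⇑(iterApp (shift t lam) n x) = (⇑(lamLin t lam))^[n] x := by
  induction n generalizing x with
  | zero => rfl
  | succ n ih =>
    obtain ⟨hdom, hx⟩ := hx
    rw [iterApp, dif_pos hdom, ih hx, Function.iterate_succ_apply]
    rfl

def shiftMoments (u : V) (n : ℕ) : ℝ := ‖iterApp (shift t lam) n (evec u)‖ ^ 2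

theorem shiftMoments_zero (u : V) : shiftMoments t lam u 0 = 1 := by
  simp [shiftMoments, iterApp, evec, lp.norm_single]

theorem ofReal_shiftMoments_succ (hdom : spanDomInfty t lam) (u : V) (n : ℕ) :
    ENNReal.ofReal (shiftMoments t lam u (n + 1)) =
      ∑' v : t.chi u, ENNReal.ofReal (‖lam v‖ ^ 2) * ENNReal.ofReal (shiftMoments t lam v n) := by
  have hmem (w : V) (m : ℕ) : iterMem (shift t lam) m (evec w) :=
    hdom _ (Submodule.subset_span ⟨w, rfl⟩) m
  simp only [shiftMoments, ofReal_norm_sq_eq_tsum, coe_iterApp_shift t lam (hmem _ _),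
    ofReal_normSq_lamLin_iterate_succ_evec, ← ENNReal.tsum_mul_left]
  exact ENNReal.tsum_comm

end Shift

section Vertex

variable {V : Type*} (t : DirectedTree V) (lam : V → ℂ) (μ : V → Measure ℝ) (u : V)

def chiMeasure : Measure ℝ :=
  Measure.sum fun v : t.chi u => ENNReal.ofReal (‖lam v‖ ^ 2) • μ v

theorem consMeasure_eq_numap : consMeasure t lam μ u = numap 1 (chiMeasure t lam μ u) := by
  simp only [consMeasure, numap, chiMeasure, withDensity_sum, withDensity_smul_measure,
    recipInt_sum_smul _ _ MeasurableSet.univ, ENNReal.ofReal_one]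

theorem isRepMeasure_chiMeasure (hdom : spanDomInfty t lam)
    (hrep : ∀ v ∈ t.chi u, IsRepMeasure (μ v) (shiftMoments t lam v)) :
    IsRepMeasure (chiMeasure t lam μ u) fun n => shiftMoments t lam u (n + 1) :=
  IsRepMeasure.sum_smul _ (fun v => hrep v v.2) (fun _ => sq_nonneg _)
    (ofReal_shiftMoments_succ t lam hdom u)

end Vertex

end Paper

theorem stmt12_general {V : Type*} (t : Paper.DirectedTree V) (lam : V → ℂ)
    (hdom : spanDomInfty t lam) (u : V)
    (μ : V → Measure ℝ)
    (hrep : ∀ v ∈ t.chi u,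
      IsRepMeasure (μ v) fun n => ‖iterApp (shift t lam) n (evec v)‖ ^ 2) :
    ((∑' v : t.chi u, ENNReal.ofReal (‖lam (v : V)‖ ^ 2) * recipInt (μ (v : V)) Set.univ) ≤ 1 →
      IsStieltjes (fun n => ‖iterApp (shift t lam) n (evec u)‖ ^ 2) ∧
      IsRepMeasure (consMeasure t lam μ u)
        fun n => ‖iterApp (shift t lam) n (evec u)‖ ^ 2) ∧
    (IsStieltjes (fun n => ‖iterApp (shift t lam) n (evec u)‖ ^ 2) →
      Determinate (fun n => ‖iterApp (shift t lam) (n + 1) (evec u)‖ ^ 2) →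
      (∑' v : t.chi u, ENNReal.ofReal (‖lam (v : V)‖ ^ 2) * recipInt (μ (v : V)) Set.univ) ≤ 1 ∧
      Determinate (fun n => ‖iterApp (shift t lam) n (evec u)‖ ^ 2) ∧
      IsRepMeasure (consMeasure t lam μ u)
        fun n => ‖iterApp (shift t lam) n (evec u)‖ ^ 2) := by
  have hν := isRepMeasure_chiMeasure t lam μ u hdom hrep
  have hR : recipInt (chiMeasure t lam μ u) Set.univ =
      ∑' v : t.chi u, ENNReal.ofReal (‖lam (v : V)‖ ^ 2) * recipInt (μ (v : V)) Set.univ :=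
    recipInt_sum_smul _ _ MeasurableSet.univ
  have hcons : consMeasure t lam μ u = numap (shiftMoments t lam u 0) (chiMeasure t lam μ u) := by
    rw [shiftMoments_zero, consMeasure_eq_numap]
  have hback (ρ : Measure ℝ) (hρ : IsRepMeasure ρ (shiftMoments t lam u))
      (hdet : Determinate fun n => shiftMoments t lam u (n + 1)) :
      recipInt (chiMeasure t lam μ u) Set.univ ≤ 1 ∧ ρ = consMeasure t lam μ u := by
    have hmu : mumap ρ = chiMeasure t lam μ u := hdet hρ.mumap hν
    refine ⟨?_, by rw [hcons, ← hmu, numap_mumap_eq hρ]⟩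
    simpa [hmu, shiftMoments_zero] using hρ.recipInt_mumap_le
  refine ⟨fun hle => ?_, fun ⟨ρ, hρ⟩ hdet => ?_⟩
  · have h := hcons ▸ hν.numap (sq_nonneg _) (by rwa [hR, shiftMoments_zero, ENNReal.ofReal_one])
    exact ⟨⟨_, h⟩, h⟩
  · obtain ⟨hle, rfl⟩ := hback ρ hρ hdet
    exact ⟨hR ▸ hle, fun ρ₁ ρ₂ h₁ h₂ => (hback ρ₁ h₁ hdet).2.trans (hback ρ₂ h₂ hdet).2.symm, hρ⟩

/-- the consistency condition at a vertex versus backward extendibility. -/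
theorem stmt12 {V : Type*} (t : Paper.DirectedTree V) (lam : V → ℂ)
    (hdom : spanDomInfty t lam) (u : V) (hne : (t.chi u).Nonempty)
    (μ : V → Measure ℝ)
    (hrep : ∀ v ∈ t.chi u,
      IsRepMeasure (μ v) fun n => ‖iterApp (shift t lam) n (evec v)‖ ^ 2) :
    ((∑' v : t.chi u, ENNReal.ofReal (‖lam (v : V)‖ ^ 2) * recipInt (μ (v : V)) Set.univ) ≤ 1 →
      IsStieltjes (fun n => ‖iterApp (shift t lam) n (evec u)‖ ^ 2) ∧
      IsRepMeasure (consMeasure t lam μ u)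
        fun n => ‖iterApp (shift t lam) n (evec u)‖ ^ 2) ∧
    (IsStieltjes (fun n => ‖iterApp (shift t lam) n (evec u)‖ ^ 2) →
      Determinate (fun n => ‖iterApp (shift t lam) (n + 1) (evec u)‖ ^ 2) →
      (∑' v : t.chi u, ENNReal.ofReal (‖lam (v : V)‖ ^ 2) * recipInt (μ (v : V)) Set.univ) ≤ 1 ∧
      Determinate (fun n => ‖iterApp (shift t lam) n (evec u)‖ ^ 2) ∧
      IsRepMeasure (consMeasure t lam μ u)
        fun n => ‖iterApp (shift t lam) n (evec u)‖ ^ 2) :=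
  stmt12_general t lam hdom u μ hrep
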